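/- For every $r \ge 2$ and every $n \ge 2$ there exists an $n$-balanced $r$-partite $r$-graph $H$ such that every legal $(r-1)$-tuple has degree at least $n/2 - 1$ in $H$, but $H$ has no perfect matching. -/

import Mathlib

/-- The degree of the legal `(r-1)`-tuple obtained by restricting the full tuple `f`
to the sides other than side `j`: the number of edges agreeing with `f` outside side `j`. -/
def degAvoiding {r n : ℕ} (E : Finset (Fin r → Fin n)) (j : Fin r)
    (f : Fin r → Fin n) : ℕ :=
  (E.filter (fun e => ∀ i, i ≠ j → e i = f i)).card

/-- A perfect matching of an `r`-partite `r`-graph whose sides are `r` copies of `Fin n`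
(side `i` consisting of the values of the `i`-th coordinate) with edge set `E`:
a subset of `E` such that every vertex of every side lies in exactly one of its edges
(this forces the edges to be pairwise disjoint and to cover all vertices). -/
def IsPerfectMatchingFin {r n : ℕ} (E M : Finset (Fin r → Fin n)) : Prop :=
  M ⊆ E ∧ ∀ (i : Fin r) (v : Fin n), ∃! e, e ∈ M ∧ e i = v

/-!
Weight each vertex `v` of side `i` by `1 ∈ ZMod 2` if `v ∈ A i` and by `0` otherwise, and take as
edges the tuples of total weight `0`. A legal `(r-1)`-tuple missing side `j` then extends to an edge
exactly through `A j` or exactly through its complement, so if every `A i` has about `n/2` elements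
all these degrees are at least `n/2 - 1`. A perfect matching meets every vertex once, so it would
force the total weight `∑ i, #(A i)` of all vertices to vanish in `ZMod 2`; choosing one `A i` of odd
size and all others of even size rules it out.
-/

open Finset

section ZeroSum

variable {G : Type*} [AddCommMonoid G] {r n : ℕ}

def zeroSumEdges [DecidableEq G] (w : Fin r → Fin n → G) : Finset (Fin r → Fin n) :=
  {e | ∑ i, w i (e i) = 0}

theorem IsPerfectMatchingFin.sum_eval_eq {E M : Finset (Fin r → Fin n)}
    (hM : IsPerfectMatchingFin E M) (i : Fin r) (x : Fin n → G) :
    ∑ e ∈ M, x (e i) = ∑ v, x v :=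
  Finset.sum_nbij (fun e => e i) (fun _ _ => mem_univ _)
    (fun _ he₁ _ he₂ h => (hM.2 i _).unique ⟨he₁, h⟩ ⟨he₂, rfl⟩)
    (fun v _ => by obtain ⟨e, he, -⟩ := hM.2 i v; exact ⟨e, he⟩)
    (fun _ _ => rfl)

theorem sum_sum_eq_zero_of_isPerfectMatchingFin [DecidableEq G] {w : Fin r → Fin n → G}
    {M : Finset (Fin r → Fin n)} (hM : IsPerfectMatchingFin (zeroSumEdges w) M) :
    ∑ i, ∑ v, w i v = 0 := by
  calc ∑ i, ∑ v, w i v = ∑ i, ∑ e ∈ M, w i (e i) :=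
        Finset.sum_congr rfl fun i _ => (hM.sum_eval_eq i (w i)).symm
    _ = ∑ e ∈ M, ∑ i, w i (e i) := Finset.sum_comm
    _ = 0 := Finset.sum_eq_zero fun e he => (mem_filter.1 (hM.1 he)).2

theorem degAvoiding_zeroSumEdges [DecidableEq G] (w : Fin r → Fin n → G) (j : Fin r)
    (f : Fin r → Fin n) :
    degAvoiding (zeroSumEdges w) j f = #{v | w j v + ∑ i ∈ univ.erase j, w i (f i) = 0} := by
  have sum_eq {e : Fin r → Fin n} (he : ∀ i, i ≠ j → e i = f i) :
      ∑ i, w i (e i) = w j (e j) + ∑ i ∈ univ.erase j, w i (f i) := by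
    rw [← add_sum_erase _ _ (mem_univ j)]
    congr 1
    exact Finset.sum_congr rfl fun i hi => by rw [he i (ne_of_mem_erase hi)]
  refine Finset.card_nbij' (fun e => e j) (Function.update f j) ?_ ?_ ?_ ?_
  · intro e he
    simp only [coe_filter, zeroSumEdges, mem_filter, mem_univ, true_and, Set.mem_ofPred_eq] at he ⊢
    rw [sum_eq he.2] at he
    exact he.1
  · intro v hv
    simp only [coe_filter, mem_univ, true_and, Set.mem_ofPred_eq] at hv
    have hupd : ∀ i, i ≠ j → Function.update f j v i = f i := fun i hi =>
      Function.update_of_ne hi _ _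
    simp only [coe_filter, zeroSumEdges, mem_filter, mem_univ, true_and, Set.mem_ofPred_eq]
    refine ⟨?_, hupd⟩
    rwa [sum_eq hupd, Function.update_self]
  · intro e he
    simp only [coe_filter, Set.mem_ofPred_eq] at he
    funext i
    by_cases hij : i = j
    · subst hij; exact Function.update_self _ _ _
    · rw [Function.update_of_ne hij, he.2 i hij]
  · intro v _
    exact Function.update_self _ _ _

end ZeroSum

section Parity

variable {r n : ℕ}

def parityEdges (A : Fin r → Finset (Fin n)) : Finset (Fin r → Fin n) :=
  zeroSumEdges fun i v => if v ∈ A i then (1 : ZMod 2) else 0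

theorem min_card_le_degAvoiding_parityEdges (A : Fin r → Finset (Fin n)) (j : Fin r)
    (f : Fin r → Fin n) : min #(A j) #(A j)ᶜ ≤ degAvoiding (parityEdges A) j f := by
  rw [parityEdges, degAvoiding_zeroSumEdges]
  generalize ∑ i ∈ univ.erase j, (if f i ∈ A i then (1 : ZMod 2) else 0) = c
  rcases (by decide : ∀ c : ZMod 2, c = 0 ∨ c = 1) c with rfl | rfl
  · refine (min_le_right _ _).trans (card_le_card fun v hv => ?_)
    simp [mem_compl.1 hv]
  · refine (min_le_left _ _).trans (card_le_card fun v hv => ?_)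
    simp only [mem_filter, mem_univ, hv, if_true, true_and]
    decide

theorem not_exists_isPerfectMatchingFin_parityEdges (A : Fin r → Finset (Fin n))
    (hA : ∑ i, (#(A i) : ZMod 2) ≠ 0) :
    ¬ ∃ M, IsPerfectMatchingFin (parityEdges A) M := by
  rintro ⟨M, hM⟩
  refine hA (Eq.trans ?_ (sum_sum_eq_zero_of_isPerfectMatchingFin hM))
  simp only [sum_boole, filter_mem_eq_inter, univ_inter]

theorem exists_finset_card_eq_parity (hn : 0 < n) (p : ZMod 2) :
    ∃ A : Finset (Fin n), (#A : ZMod 2) = p ∧ n ≤ 2 * min #A #Aᶜ + 2 := by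
  have add_one_of_ne : ∀ a b : ZMod 2, a ≠ b → a + 1 = b := by decide
  set k := if ((n / 2 : ℕ) : ZMod 2) = p then n / 2 else n / 2 + 1 with hk
  have hkn : k ≤ n := by split_ifs at hk <;> omega
  obtain ⟨A, -, hA⟩ := exists_subset_card_eq (s := (univ : Finset (Fin n))) (by simpa using hkn)
  refine ⟨A, ?_, ?_⟩
  · rw [hA, hk]
    split_ifs with h
    · exact h
    · push_cast; exact add_one_of_ne _ _ h
  · rw [card_compl, Fintype.card_fin, hA]
    split_ifs at hk <;> omega

end Parity

theorem stmt_6 (r n : ℕ) (hr : 2 ≤ r) (hn : 2 ≤ n) :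
    ∃ E : Finset (Fin r → Fin n),
      (∀ (j : Fin r) (f : Fin r → Fin n),
        (n : ℝ) / 2 - 1 ≤ (degAvoiding E j f : ℝ)) ∧
      ¬ ∃ M : Finset (Fin r → Fin n), IsPerfectMatchingFin E M := by
  obtain ⟨A₁, hA₁, hA₁n⟩ := exists_finset_card_eq_parity (n := n) (by omega) 1
  obtain ⟨A₀, hA₀, hA₀n⟩ := exists_finset_card_eq_parity (n := n) (by omega) 0
  let i₀ : Fin r := ⟨0, by omega⟩
  let A : Fin r → Finset (Fin n) := fun i => if i = i₀ then A₁ else A₀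
  have hAn : ∀ j, n ≤ 2 * min #(A j) #(A j)ᶜ + 2 := fun j => by
    by_cases hj : j = i₀ <;> simp only [A, hj, if_true, if_false] <;> assumption
  have hA : ∑ i, (#(A i) : ZMod 2) = 1 := by
    rw [← Fintype.sum_ite_eq' i₀ fun _ => (1 : ZMod 2)]
    exact Finset.sum_congr rfl fun i _ => by by_cases hi : i = i₀ <;> simp [A, hi, hA₁, hA₀]
  refine ⟨parityEdges A, fun j f => ?_,
    not_exists_isPerfectMatchingFin_parityEdges A (by rw [hA]; decide)⟩
  have hdeg : n ≤ 2 * degAvoiding (parityEdges A) j f + 2 := by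
    grw [hAn j, min_card_le_degAvoiding_parityEdges A j f]
  have hdeg_real : (n : ℝ) ≤ 2 * degAvoiding (parityEdges A) j f + 2 := by exact_mod_cast hdeg
  linarith
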